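/- arXiv:1705.00880 — 3 statements merged into one kernel-verified Lean document; each statement's English description precedes it below -/
import Mathlib

section
/- Let V be a real Hilbert space, Ũ a closed subspace of V, U a finite-dimensional subspace with U ⊆ Ũ, P_U the orthogonal projection of V onto U, and P a projection onto U along a space of functionals W contained in the continuous dual of Ũ. Let c denote the operator norm of (P − P_U) restricted to Ũ. Then for every v ∈ Ũ, ‖v − P v‖² = ‖v − P_U v‖² + ‖P_U v − P v‖², and consequently ‖v − P v‖² ≤ (1 + c²) ‖v − P_U v‖². -/
/-!
Since `P v` and `P_U v` both lie in `U` while `v - P_U v ⊥ U`, Pythagoras splits `‖v - P v‖²`.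
As `P` fixes `U`, `P v - P_U v` is the image of the residual `v - P_U v ∈ Ũ` under `P - P_U`,
so its norm is at most `c ‖v - P_U v‖`. This needs `c` to be a genuine bound, i.e. `P` bounded
on `Ũ`: there `P` factors as the moment map `v ↦ (wᵢ v)ᵢ` for a basis `(wᵢ)` of `W`, followed
by the inverse of `u ↦ (wᵢ u)ᵢ`, an isomorphism `U ≃ ℝⁿ` by nondegeneracy and `dim W = dim U`.
-/

/-- The operator norm of (the restriction to `s` of) a map `f`, i.e. the least
nonnegative constant `c` such that `‖f v‖ ≤ c * ‖v‖` for all `v ∈ s`. -/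
noncomputable def opNormOn {V W : Type*} [SeminormedAddCommGroup V] [SeminormedAddCommGroup W]
    (f : V → W) (s : Set V) : ℝ :=
  sInf {c : ℝ | 0 ≤ c ∧ ∀ v ∈ s, ‖f v‖ ≤ c * ‖v‖}

theorem norm_apply_le_opNormOn_mul {V W : Type*} [SeminormedAddCommGroup V]
    [SeminormedAddCommGroup W] {f : V → W} {s : Set V} {C : ℝ}
    (hC : ∀ v ∈ s, ‖f v‖ ≤ C * ‖v‖) {v : V} (hv : v ∈ s) :
    ‖f v‖ ≤ opNormOn f s * ‖v‖ := by
  have hne : {c : ℝ | 0 ≤ c ∧ ∀ v ∈ s, ‖f v‖ ≤ c * ‖v‖}.Nonempty :=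
    ⟨max C 0, le_max_right _ _, fun v hv =>
      (hC v hv).trans (mul_le_mul_of_nonneg_right (le_max_left _ _) (norm_nonneg v))⟩
  rcases (norm_nonneg v).eq_or_lt with hzero | hpos
  · obtain ⟨c, -, hc⟩ := hne
    simpa [← hzero] using hc v hv
  · rw [← div_le_iff₀ hpos]
    exact le_csInf hne fun c hc => (div_le_iff₀ hpos).mpr (hc.2 v hv)

section ObliqueProjection

variable {𝕜 E F : Type*} [NontriviallyNormedField 𝕜] [NormedAddCommGroup E] [NormedSpace 𝕜 E]
  [AddCommGroup F] [Module 𝕜 F] {ι : F →ₗ[𝕜] E} {W : Submodule 𝕜 (E →L[𝕜] 𝕜)} {T : E → F}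

def IsObliqueProjection (ι : F →ₗ[𝕜] E) (W : Submodule 𝕜 (E →L[𝕜] 𝕜)) (T : E → F) : Prop :=
  ∀ x (w : W), (w : E →L[𝕜] 𝕜) (ι (T x)) = (w : E →L[𝕜] 𝕜) x

theorem IsObliqueProjection.leftInverse (hT : IsObliqueProjection ι W T)
    (hnd : ∀ u, (∀ w : W, (w : E →L[𝕜] 𝕜) (ι u) = 0) → u = 0) :
    Function.LeftInverse T ι := fun u =>
  sub_eq_zero.mp <| hnd _ fun w => by rw [map_sub, map_sub, hT, sub_self]

theorem IsObliqueProjection.exists_continuousLinearMap [CompleteSpace 𝕜] [TopologicalSpace F]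
    [IsTopologicalAddGroup F] [ContinuousSMul 𝕜 F] [T2Space F]
    [FiniteDimensional 𝕜 W] (hT : IsObliqueProjection ι W T)
    (hnd : ∀ u, (∀ w : W, (w : E →L[𝕜] 𝕜) (ι u) = 0) → u = 0)
    (hdim : Module.finrank 𝕜 W = Module.finrank 𝕜 F) :
    ∃ Q : E →L[𝕜] F, ⇑Q = T := by
  have : Module.Free 𝕜 W := Module.Free.of_divisionRing 𝕜 W
  let b := Module.finBasis 𝕜 W
  let moments : E →L[𝕜] (Fin (Module.finrank 𝕜 W) → 𝕜) :=
    ContinuousLinearMap.pi fun i => (b i : E →L[𝕜] 𝕜)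
  let g : F →ₗ[𝕜] (Fin (Module.finrank 𝕜 W) → 𝕜) := moments.toLinearMap ∘ₗ ι
  have hg : Function.Injective g := by
    rw [← LinearMap.ker_eq_bot, LinearMap.ker_eq_bot']
    intro u hu
    refine hnd u fun w => ?_
    have : (ContinuousLinearMap.apply 𝕜 𝕜 (ι u)).toLinearMap ∘ₗ W.subtype = 0 :=
      b.ext fun i => congrFun hu i
    exact LinearMap.congr_fun this w
  have : FiniteDimensional 𝕜 F := Module.Finite.of_injective g hg
  let e := g.linearEquivOfInjective hg (by simp [hdim])
  refine ⟨(e.symm : _ →ₗ[𝕜] F).toContinuousLinearMap ∘L moments, funext fun x => ?_⟩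
  have : e (T x) = moments x := funext fun i => by simpa [e, g, moments] using hT x (b i)
  simp [← this]

end ObliqueProjection

namespace Submodule

variable {𝕜 E : Type*} [RCLike 𝕜] [NormedAddCommGroup E] [InnerProductSpace 𝕜 E]
  (K : Submodule 𝕜 E) [K.HasOrthogonalProjection]

theorem norm_sub_sq_eq_add_of_mem (v : E) {u : E} (hu : u ∈ K) :
    ‖v - u‖ ^ 2 = ‖v - (K.orthogonalProjectionOnto v : E)‖ ^ 2
      + ‖(K.orthogonalProjectionOnto v : E) - u‖ ^ 2 := by
  have horth : inner 𝕜 (v - (K.orthogonalProjectionOnto v : E))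
      ((K.orthogonalProjectionOnto v : E) - u) = 0 :=
    K.inner_left_of_mem_orthogonal (K.sub_mem (K.orthogonalProjectionOnto v).2 hu)
      (K.sub_starProjection_mem_orthogonal v)
  simpa only [sq, sub_add_sub_cancel] using
    norm_add_sq_eq_norm_sq_add_norm_sq_of_inner_eq_zero _ _ horth

theorem sub_orthogonalProjectionOnto_apply_residual {P : E →ₗ[𝕜] E} (hP : ∀ u ∈ K, P u = u)
    (v : E) :
    P (v - K.orthogonalProjectionOnto v)
        - K.orthogonalProjectionOnto (v - K.orthogonalProjectionOnto v)
      = P v - K.orthogonalProjectionOnto v := by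
  have hzero : K.orthogonalProjectionOnto (v - K.orthogonalProjectionOnto v) = 0 :=
    orthogonalProjectionOnto_apply_of_mem_orthogonal (K.sub_starProjection_mem_orthogonal v)
  rw [hzero, map_sub, hP _ (K.orthogonalProjectionOnto v).2, ZeroMemClass.coe_zero, sub_zero]

end Submodule

theorem stmt_5_general {V : Type*} [NormedAddCommGroup V] [InnerProductSpace ℝ V]
    (Ut : Submodule ℝ V) (U : Submodule ℝ V) [FiniteDimensional ℝ U] (hle : U ≤ Ut)
    (W : Submodule ℝ (Ut →L[ℝ] ℝ)) [FiniteDimensional ℝ W]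
    (hdim : Module.finrank ℝ W = Module.finrank ℝ U)
    (hnd : ∀ u : U, (∀ w : W, (w : Ut →L[ℝ] ℝ) (Submodule.inclusion hle u) = 0) → u = 0)
    (P : V →ₗ[ℝ] V) (hPmem : ∀ v : V, P v ∈ U)
    (hPproj : ∀ v : V, ∀ hv : v ∈ Ut, ∀ w : W,
      (w : Ut →L[ℝ] ℝ) ⟨P v, hle (hPmem v)⟩ = (w : Ut →L[ℝ] ℝ) ⟨v, hv⟩) :
    ∀ c : ℝ,
      c = opNormOn (fun v : V => P v - (U.orthogonalProjectionOnto v : V)) (Ut : Set V) →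
      ∀ v ∈ Ut,
        ‖v - P v‖ ^ 2 = ‖v - (U.orthogonalProjectionOnto v : V)‖ ^ 2
            + ‖(U.orthogonalProjectionOnto v : V) - P v‖ ^ 2 ∧
        ‖v - P v‖ ^ 2 ≤ (1 + c ^ 2) * ‖v - (U.orthogonalProjectionOnto v : V)‖ ^ 2 := by
  intro c hc v hv
  have hT : IsObliqueProjection (Submodule.inclusion hle) W fun x : Ut => ⟨P x, hPmem x⟩ :=
    fun x w => hPproj x x.2 w
  have hfix : ∀ u ∈ U, P u = u := fun u hu => congrArg Subtype.val (hT.leftInverse hnd ⟨u, hu⟩)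
  obtain ⟨Q, hQ⟩ := hT.exists_continuousLinearMap hnd hdim
  let R : Ut →L[ℝ] V := U.subtypeL ∘L Q - U.starProjection ∘L Ut.subtypeL
  have hbound : ∀ x ∈ (Ut : Set V), ‖P x - (U.orthogonalProjectionOnto x : V)‖ ≤ ‖R‖ * ‖x‖ :=
    fun x hx => by simpa [R, hQ] using R.le_opNorm ⟨x, hx⟩
  have hresidual := norm_apply_le_opNormOn_mul hbound
    (Ut.sub_mem hv (hle (U.orthogonalProjectionOnto v).2))
  rw [U.sub_orthogonalProjectionOnto_apply_residual hfix, norm_sub_rev, ← hc] at hresidual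
  have hpyth := U.norm_sub_sq_eq_add_of_mem v (hPmem v)
  refine ⟨hpyth, ?_⟩
  calc ‖v - P v‖ ^ 2
      ≤ ‖v - (U.orthogonalProjectionOnto v : V)‖ ^ 2
        + (c * ‖v - (U.orthogonalProjectionOnto v : V)‖) ^ 2 := by
        rw [hpyth]; gcongr
    _ = (1 + c ^ 2) * ‖v - (U.orthogonalProjectionOnto v : V)‖ ^ 2 := by ring

/-- Pythagorean identity and quasi-optimality of the oblique projection `P`
onto `U` along `W ⊆ Ũ'` compared with the orthogonal projection `P_U`, on `Ũ`. -/
theorem stmt_5 {V : Type*} [NormedAddCommGroup V] [InnerProductSpace ℝ V] [CompleteSpace V]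
    (Ut : Submodule ℝ V) (hUtc : IsClosed (Ut : Set V))
    (U : Submodule ℝ V) [FiniteDimensional ℝ U] (hle : U ≤ Ut)
    (W : Submodule ℝ (Ut →L[ℝ] ℝ)) [FiniteDimensional ℝ W]
    (hdim : Module.finrank ℝ W = Module.finrank ℝ U)
    (hnd : ∀ u : U, (∀ w : W, (w : Ut →L[ℝ] ℝ) (Submodule.inclusion hle u) = 0) → u = 0)
    (P : V →ₗ[ℝ] V) (hPmem : ∀ v : V, P v ∈ U)
    (hPproj : ∀ v : V, ∀ hv : v ∈ Ut, ∀ w : W,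
      (w : Ut →L[ℝ] ℝ) ⟨P v, hle (hPmem v)⟩ = (w : Ut →L[ℝ] ℝ) ⟨v, hv⟩) :
    ∀ c : ℝ,
      c = opNormOn (fun v : V => P v - (U.orthogonalProjectionOnto v : V)) (Ut : Set V) →
      ∀ v ∈ Ut,
        ‖v - P v‖ ^ 2 = ‖v - (U.orthogonalProjectionOnto v : V)‖ ^ 2
            + ‖(U.orthogonalProjectionOnto v : V) - P v‖ ^ 2 ∧
        ‖v - P v‖ ^ 2 ≤ (1 + c ^ 2) * ‖v - (U.orthogonalProjectionOnto v : V)‖ ^ 2 :=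
  stmt_5_general Ut U hle W hdim hnd P hPmem hPproj
end

section
/- Let E₁ and E₂ be finite-dimensional real vector spaces. For i = 1, 2 let P_i be the projection of E_i onto a subspace U_i along a space W_i of linear functionals on E_i (with dim W_i = dim U_i and the only element of U_i annihilated by all of W_i being 0). Let U be a subspace of E₁ ⊗ E₂ contained in U₁ ⊗ U₂, and let W be a space of linear functionals on E₁ ⊗ E₂ contained in the image of W₁ ⊗ W₂ under the natural map sending w₁ ⊗ w₂ to the functional determined by (w₁ ⊗ w₂)(a ⊗ b) = w₁(a)·w₂(b), with dim W = dim U and the only element of U annihilated by all of W being 0. Let P be the projection of E₁ ⊗ E₂ onto U along W. Then P ∘ (P₁ ⊗ P₂) = (P₁ ⊗ P₂) ∘ P = P. -/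
open scoped TensorProduct

/-- `P` is the projection onto `U` along `W`: it maps into `U` and every
functional in `W` agrees on `P v` and `v`. -/
def IsProjectionAlong {V : Type*} [AddCommGroup V] [Module ℝ V]
    (P : V →ₗ[ℝ] V) (U : Submodule ℝ V) (W : Submodule ℝ (Module.Dual ℝ V)) : Prop :=
  (∀ v : V, P v ∈ U) ∧ ∀ v : V, ∀ w ∈ W, w (P v) = w v

/-- if `P` is the projection of `E₁ ⊗ E₂` onto `U ⊆ U₁ ⊗ U₂` along
`W ⊆ W₁ ⊗ W₂`, then `P` and `P₁ ⊗ P₂` commute and both compositions equal `P`. -/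
theorem stmt_14 {E₁ E₂ : Type*}
    [AddCommGroup E₁] [Module ℝ E₁] [FiniteDimensional ℝ E₁]
    [AddCommGroup E₂] [Module ℝ E₂] [FiniteDimensional ℝ E₂]
    (U₁ : Submodule ℝ E₁) (W₁ : Submodule ℝ (Module.Dual ℝ E₁))
    (U₂ : Submodule ℝ E₂) (W₂ : Submodule ℝ (Module.Dual ℝ E₂))
    (hdim₁ : Module.finrank ℝ W₁ = Module.finrank ℝ U₁)
    (hdim₂ : Module.finrank ℝ W₂ = Module.finrank ℝ U₂)
    (hnd₁ : ∀ u ∈ U₁, (∀ w ∈ W₁, w u = 0) → u = 0)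
    (hnd₂ : ∀ u ∈ U₂, (∀ w ∈ W₂, w u = 0) → u = 0)
    (P₁ : E₁ →ₗ[ℝ] E₁) (P₂ : E₂ →ₗ[ℝ] E₂)
    (hP₁ : IsProjectionAlong P₁ U₁ W₁) (hP₂ : IsProjectionAlong P₂ U₂ W₂)
    (U : Submodule ℝ (E₁ ⊗[ℝ] E₂))
    (hU : U ≤ LinearMap.range (TensorProduct.map U₁.subtype U₂.subtype))
    (W : Submodule ℝ (Module.Dual ℝ (E₁ ⊗[ℝ] E₂)))
    (hW : W ≤ Submodule.map (TensorProduct.dualDistrib ℝ E₁ E₂)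
              (LinearMap.range (TensorProduct.map W₁.subtype W₂.subtype)))
    (hdim : Module.finrank ℝ W = Module.finrank ℝ U)
    (hnd : ∀ u ∈ U, (∀ w ∈ W, w u = 0) → u = 0)
    (P : E₁ ⊗[ℝ] E₂ →ₗ[ℝ] E₁ ⊗[ℝ] E₂)
    (hP : IsProjectionAlong P U W) :
    P ∘ₗ TensorProduct.map P₁ P₂ = P ∧ TensorProduct.map P₁ P₂ ∘ₗ P = P := by
  -- P₁ fixes U₁, P₂ fixes U₂
  have fix₁ : ∀ u ∈ U₁, P₁ u = u := by
    intro u hu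
    have h : P₁ u - u ∈ U₁ := U₁.sub_mem (hP₁.1 u) hu
    exact sub_eq_zero.mp (hnd₁ _ h (fun w hw => by simp [hP₁.2 u w hw]))
  have fix₂ : ∀ u ∈ U₂, P₂ u = u := by
    intro u hu
    have h : P₂ u - u ∈ U₂ := U₂.sub_mem (hP₂.1 u) hu
    exact sub_eq_zero.mp (hnd₂ _ h (fun w hw => by simp [hP₂.2 u w hw]))
  -- composition with subtypes
  have hcomp₁ : P₁ ∘ₗ U₁.subtype = U₁.subtype := by
    ext x; exact fix₁ x x.2
  have hcomp₂ : P₂ ∘ₗ U₂.subtype = U₂.subtype := by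
    ext x; exact fix₂ x x.2
  have hfixU : ∀ v, v ∈ LinearMap.range (TensorProduct.map U₁.subtype U₂.subtype) →
      TensorProduct.map P₁ P₂ v = v := by
    rintro _ ⟨y, rfl⟩
    have : TensorProduct.map P₁ P₂ ∘ₗ TensorProduct.map U₁.subtype U₂.subtype
        = TensorProduct.map U₁.subtype U₂.subtype := by
      rw [← TensorProduct.map_comp, hcomp₁, hcomp₂]
    exact congrFun (congrArg DFunLike.coe this) y
  -- every w ∈ W satisfies w ∘ (P₁ ⊗ P₂) = w
  have key : ∀ y : W₁ ⊗[ℝ] W₂,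
      (TensorProduct.dualDistrib ℝ E₁ E₂ (TensorProduct.map W₁.subtype W₂.subtype y)) ∘ₗ
        TensorProduct.map P₁ P₂
      = TensorProduct.dualDistrib ℝ E₁ E₂ (TensorProduct.map W₁.subtype W₂.subtype y) := by
    intro y
    induction y using TensorProduct.induction_on with
    | zero => simp
    | tmul w₁ w₂ =>
      apply TensorProduct.ext'
      intro a b
      simp only [LinearMap.comp_apply, TensorProduct.map_tmul,
        TensorProduct.dualDistrib_apply, Submodule.subtype_apply]
      rw [hP₁.2 a w₁ w₁.2, hP₂.2 b w₂ w₂.2]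
    | add y₁ y₂ ih₁ ih₂ =>
      simp only [map_add, LinearMap.add_comp] at *
      rw [ih₁, ih₂]
  have hWinv : ∀ w ∈ W, ∀ v, w (TensorProduct.map P₁ P₂ v) = w v := by
    intro w hw v
    obtain ⟨x, ⟨y, rfl⟩, rfl⟩ := hW hw
    exact congrFun (congrArg DFunLike.coe (key y)) v
  constructor
  · refine LinearMap.ext fun v => ?_
    have h1 : P (TensorProduct.map P₁ P₂ v) - P v ∈ U :=
      U.sub_mem (hP.1 _) (hP.1 _)
    have h2 : P (TensorProduct.map P₁ P₂ v) - P v = 0 := by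
      refine hnd _ h1 (fun w hw => ?_)
      rw [map_sub, hP.2 _ w hw, hP.2 _ w hw, hWinv w hw v, sub_self]
    exact sub_eq_zero.mp h2
  · refine LinearMap.ext fun v => ?_
    exact hfixU _ (hU (hP.1 v))
end

section
/- Let H be a real Hilbert space, U ⊆ V closed subspaces of H with orthogonal projections P_U and P_V, u ∈ H, w ∈ V, and δ ≥ 0. If ‖P_V u − w‖ ≤ δ · ‖u − P_V u‖, then ‖u − P_U u‖² ≤ (1 + 2δ²) · ‖u − P_V u‖² + 2 · ‖w − P_U w‖². -/
/-! Replacing `P_U u` by the competitor `P_U w ∈ U ⊆ V` can only increase the distance to `u`,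
and since `u - P_V u ⊥ V`, Pythagoras splits `‖u - P_U w‖²` into `‖u - P_V u‖² + ‖P_V u - P_U w‖²`.
The last term is at most `(δ ‖u - P_V u‖ + ‖w - P_U w‖)²` by the triangle inequality through `w`,
and `(a + b)² ≤ 2a² + 2b²` finishes. -/

namespace Submodule

variable {𝕜 E : Type*} [RCLike 𝕜] [NormedAddCommGroup E] [InnerProductSpace 𝕜 E]
  {K : Submodule 𝕜 E} [K.HasOrthogonalProjection]

theorem norm_sub_sq_eq_norm_sub_starProjection_sq_add (x : E) {v : E} (hv : v ∈ K) :
    ‖x - v‖ ^ 2 = ‖x - K.starProjection x‖ ^ 2 + ‖K.starProjection x - v‖ ^ 2 := by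
  have hperp : inner 𝕜 (x - K.starProjection x) (K.starProjection x - v) = 0 :=
    (K.mem_orthogonal' _).1 (K.sub_starProjection_mem_orthogonal x) _
      (K.sub_mem (K.starProjection_apply_mem x) hv)
  simpa only [sub_add_sub_cancel, sq] using
    norm_add_sq_eq_norm_sq_add_norm_sq_of_inner_eq_zero _ _ hperp

theorem norm_sub_starProjection_sq_le (x : E) {v : E} (hv : v ∈ K) :
    ‖x - K.starProjection x‖ ^ 2 ≤ ‖x - v‖ ^ 2 := by
  rw [K.norm_sub_sq_eq_norm_sub_starProjection_sq_add x hv]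
  exact le_add_of_nonneg_right (sq_nonneg _)

end Submodule

theorem stmt_17_general {H : Type*} [NormedAddCommGroup H] [InnerProductSpace ℝ H]
    (U V : Submodule ℝ H) [CompleteSpace U] [CompleteSpace V] (hUV : U ≤ V)
    (u w : H) (δ : ℝ)
    (hbound : ‖(V.orthogonalProjectionOnto u : H) - w‖ ≤ δ * ‖u - (V.orthogonalProjectionOnto u : H)‖) :
    ‖u - (U.orthogonalProjectionOnto u : H)‖ ^ 2
      ≤ (1 + 2 * δ ^ 2) * ‖u - (V.orthogonalProjectionOnto u : H)‖ ^ 2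
        + 2 * ‖w - (U.orthogonalProjectionOnto w : H)‖ ^ 2 := by
  simp only [← Submodule.starProjection_apply] at hbound ⊢
  set d := ‖u - V.starProjection u‖
  have hPUw : U.starProjection w ∈ U := U.starProjection_apply_mem w
  have htriangle : ‖V.starProjection u - U.starProjection w‖ ≤ δ * d + ‖w - U.starProjection w‖ :=
    (norm_sub_le_norm_sub_add_norm_sub _ w _).trans (add_le_add_left hbound _)
  calc ‖u - U.starProjection u‖ ^ 2 ≤ ‖u - U.starProjection w‖ ^ 2 :=
        U.norm_sub_starProjection_sq_le u hPUw
    _ = d ^ 2 + ‖V.starProjection u - U.starProjection w‖ ^ 2 :=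
        V.norm_sub_sq_eq_norm_sub_starProjection_sq_add u (hUV hPUw)
    _ ≤ d ^ 2 + (δ * d + ‖w - U.starProjection w‖) ^ 2 := by gcongr
    _ ≤ d ^ 2 + 2 * ((δ * d) ^ 2 + ‖w - U.starProjection w‖ ^ 2) := by gcongr; exact add_sq_le
    _ = (1 + 2 * δ ^ 2) * d ^ 2 + 2 * ‖w - U.starProjection w‖ ^ 2 := by ring

/-- if `U ⊆ V` are closed subspaces of a Hilbert space with orthogonal
projections `P_U`, `P_V`, `w ∈ V` and `‖P_V u − w‖ ≤ δ ‖u − P_V u‖`, then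
`‖u − P_U u‖² ≤ (1 + 2δ²) ‖u − P_V u‖² + 2 ‖w − P_U w‖²`. -/
theorem stmt_17 {H : Type*} [NormedAddCommGroup H] [InnerProductSpace ℝ H] [CompleteSpace H]
    (U V : Submodule ℝ H) [CompleteSpace U] [CompleteSpace V] (hUV : U ≤ V)
    (u w : H) (hw : w ∈ V) (δ : ℝ) (hδ : 0 ≤ δ)
    (hbound : ‖(V.orthogonalProjectionOnto u : H) - w‖ ≤ δ * ‖u - (V.orthogonalProjectionOnto u : H)‖) :
    ‖u - (U.orthogonalProjectionOnto u : H)‖ ^ 2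
      ≤ (1 + 2 * δ ^ 2) * ‖u - (V.orthogonalProjectionOnto u : H)‖ ^ 2
        + 2 * ‖w - (U.orthogonalProjectionOnto w : H)‖ ^ 2 :=
  stmt_17_general U V hUV u w δ hbound
end
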